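/- Let α ≥ 0, ν > 0, and on Ω = (0,1)² define w(x,y,t) = e^{−2π²νt}(−cos(πx)sin(πy), sin(πx)cos(πy)), u = (1 + 2π²α²)w, and p = −w·∇w interpreted via ∇p = −(w·∇)w (equivalently p = −(1/2)|w|² up to a constant, using that w·∇w is a gradient). Then (u, p, w) solves the EMAC-Reg system: u_t + (w·∇)w + ∇p − νΔu = 0, −α²Δw + w = u, and div w = 0. -/

import Mathlib

open Real

/-- `(∇u)_{ij} = ∂_j u_i` : entry of the Jacobian of a vector field. -/
noncomputable def gradEntry {d : ℕ} (u : (Fin d → ℝ) → Fin d → ℝ) (i j : Fin d)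
    (x : Fin d → ℝ) : ℝ := fderiv ℝ (fun y => u y i) x (Pi.single j 1)

/-- divergence of a vector field. -/
noncomputable def divg {d : ℕ} (u : (Fin d → ℝ) → Fin d → ℝ) (x : Fin d → ℝ) : ℝ :=
  ∑ j, gradEntry u j j x

/-- Laplacian of a scalar function. -/
noncomputable def lap {d : ℕ} (f : (Fin d → ℝ) → ℝ) (x : Fin d → ℝ) : ℝ :=
  ∑ j, fderiv ℝ (fun y => fderiv ℝ f y (Pi.single j 1)) x (Pi.single j 1)

/-- The time-dependent Taylor–Green field `w`. -/
noncomputable def wTG (ν t : ℝ) (x : Fin 2 → ℝ) : Fin 2 → ℝ :=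
  fun i => Real.exp (-2 * π^2 * ν * t) *
    (![-(Real.cos (π * x 0)) * Real.sin (π * x 1),
       Real.sin (π * x 0) * Real.cos (π * x 1)] i)

/-- `u = (1 + 2π²α²)w`. -/
noncomputable def uTG (α ν t : ℝ) (x : Fin 2 → ℝ) : Fin 2 → ℝ :=
  fun i => (1 + 2 * π^2 * α^2) * wTG ν t x i

/-!
Both fields are multiples of the Taylor–Green profile, whose components are products
`f (x₀) * g (x₁)` of `sin (π ·)` and `cos (π ·)`; each is an eigenfunction of the Laplacian with
eigenvalue `-2π²`. Hence `-α²Δw + w = (1 + 2π²α²) w = u` and `u_t = -2π²ν u = ν Δu`. For amplitude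
`a`, `sin² + cos² = 1` collapses the convective term to `(w·∇w)ᵢ = -a²π sin (π xᵢ) cos (π xᵢ)`,
which is minus the gradient of `p = a²/2 (sin² (π x₀) + sin² (π x₁))`.
-/

section SeparableCalculus

variable {f g f' g' f'' g'' : ℝ → ℝ}

open ContinuousLinearMap in
theorem hasFDerivAt_const_mul_separable (c : ℝ) (hf : ∀ s, HasDerivAt f (f' s) s)
    (hg : ∀ s, HasDerivAt g (g' s) s) (x : Fin 2 → ℝ) :
    HasFDerivAt (fun y : Fin 2 → ℝ => c * (f (y 0) * g (y 1)))
      ((c * (f' (x 0) * g (x 1))) • (proj 0 : (Fin 2 → ℝ) →L[ℝ] ℝ)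
        + (c * (f (x 0) * g' (x 1))) • (proj 1 : (Fin 2 → ℝ) →L[ℝ] ℝ)) x := by
  have h0 := (hf (x 0)).comp_hasFDerivAt x (hasFDerivAt_apply (𝕜 := ℝ) 0 x)
  have h1 := (hg (x 1)).comp_hasFDerivAt x (hasFDerivAt_apply (𝕜 := ℝ) 1 x)
  refine ((h0.mul h1).const_mul c).congr_fderiv ?_
  ext y
  simp only [add_apply, smul_apply, smul_eq_mul, proj_apply, Function.comp_apply]
  ring

theorem fderiv_const_mul_separable_single_zero (c : ℝ) (hf : ∀ s, HasDerivAt f (f' s) s)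
    (hg : ∀ s, HasDerivAt g (g' s) s) (x : Fin 2 → ℝ) :
    fderiv ℝ (fun y : Fin 2 → ℝ => c * (f (y 0) * g (y 1))) x (Pi.single 0 1)
      = c * (f' (x 0) * g (x 1)) := by
  simp [(hasFDerivAt_const_mul_separable c hf hg x).fderiv]

theorem fderiv_const_mul_separable_single_one (c : ℝ) (hf : ∀ s, HasDerivAt f (f' s) s)
    (hg : ∀ s, HasDerivAt g (g' s) s) (x : Fin 2 → ℝ) :
    fderiv ℝ (fun y : Fin 2 → ℝ => c * (f (y 0) * g (y 1))) x (Pi.single 1 1)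
      = c * (f (x 0) * g' (x 1)) := by
  simp [(hasFDerivAt_const_mul_separable c hf hg x).fderiv]

theorem lap_const_mul_separable (c : ℝ) (hf : ∀ s, HasDerivAt f (f' s) s)
    (hf' : ∀ s, HasDerivAt f' (f'' s) s) (hg : ∀ s, HasDerivAt g (g' s) s)
    (hg' : ∀ s, HasDerivAt g' (g'' s) s) (x : Fin 2 → ℝ) :
    lap (fun y : Fin 2 → ℝ => c * (f (y 0) * g (y 1))) x
      = c * (f'' (x 0) * g (x 1) + f (x 0) * g'' (x 1)) := by
  have h0 := funext (fderiv_const_mul_separable_single_zero c hf hg)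
  have h1 := funext (fderiv_const_mul_separable_single_one c hf hg)
  simp only [lap, Fin.sum_univ_two, h0, h1, fderiv_const_mul_separable_single_zero c hf' hg,
    fderiv_const_mul_separable_single_one c hf hg']
  ring

end SeparableCalculus

theorem fderiv_sum_comp_apply_single {ι : Type*} [Fintype ι] [DecidableEq ι] {q q' : ℝ → ℝ}
    (hq : ∀ s, HasDerivAt q (q' s) s) (x : ι → ℝ) (i : ι) :
    fderiv ℝ (fun y : ι → ℝ => ∑ k, q (y k)) x (Pi.single i 1) = q' (x i) := by
  have := HasFDerivAt.fun_sum (u := Finset.univ) (A := fun k (y : ι → ℝ) => q (y k))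
    fun k _ => (hq (x k)).comp_hasFDerivAt x (hasFDerivAt_apply (𝕜 := ℝ) k x)
  simp [this.fderiv, Pi.single_apply]

theorem hasDerivAt_sin_pi_mul (s : ℝ) :
    HasDerivAt (fun r => sin (π * r)) (π * cos (π * s)) s := by
  simpa [mul_comm] using ((hasDerivAt_id s).const_mul π).sin

theorem hasDerivAt_cos_pi_mul (s : ℝ) :
    HasDerivAt (fun r => cos (π * r)) (-(π * sin (π * s))) s := by
  simpa [mul_comm] using ((hasDerivAt_id s).const_mul π).cos

noncomputable def tgField (a : ℝ) (x : Fin 2 → ℝ) : Fin 2 → ℝ :=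
  fun i => a * ![-(cos (π * x 0)) * sin (π * x 1), sin (π * x 0) * cos (π * x 1)] i

noncomputable def tgPressure (a : ℝ) (x : Fin 2 → ℝ) : ℝ :=
  ∑ k, a ^ 2 / 2 * sin (π * x k) ^ 2

theorem wTG_eq_tgField (ν t : ℝ) : wTG ν t = tgField (exp (-2 * π ^ 2 * ν * t)) := rfl

theorem uTG_eq_tgField (α ν t : ℝ) :
    uTG α ν t = tgField ((1 + 2 * π ^ 2 * α ^ 2) * exp (-2 * π ^ 2 * ν * t)) := by
  ext x i
  simp only [uTG, wTG, tgField, mul_assoc]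

theorem tgField_apply_zero (a : ℝ) (x : Fin 2 → ℝ) :
    tgField a x 0 = -a * (cos (π * x 0) * sin (π * x 1)) := by
  simp [tgField]

theorem tgField_apply_one (a : ℝ) (x : Fin 2 → ℝ) :
    tgField a x 1 = a * (sin (π * x 0) * cos (π * x 1)) := by
  simp [tgField]

theorem gradEntry_tgField (a : ℝ) (x : Fin 2 → ℝ) (i j : Fin 2) :
    gradEntry (tgField a) i j x
      = a * π * ![![sin (π * x 0) * sin (π * x 1), -(cos (π * x 0) * cos (π * x 1))],
          ![cos (π * x 0) * cos (π * x 1), -(sin (π * x 0) * sin (π * x 1))]] i j := by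
  fin_cases i <;> fin_cases j <;>
    simp only [gradEntry, Fin.zero_eta, Fin.mk_one, tgField_apply_zero, tgField_apply_one,
      fderiv_const_mul_separable_single_zero _ hasDerivAt_cos_pi_mul hasDerivAt_sin_pi_mul,
      fderiv_const_mul_separable_single_one _ hasDerivAt_cos_pi_mul hasDerivAt_sin_pi_mul,
      fderiv_const_mul_separable_single_zero _ hasDerivAt_sin_pi_mul hasDerivAt_cos_pi_mul,
      fderiv_const_mul_separable_single_one _ hasDerivAt_sin_pi_mul hasDerivAt_cos_pi_mul,
      Matrix.cons_val_zero, Matrix.cons_val_one, Matrix.cons_val_fin_one] <;>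
    ring

theorem divg_tgField (a : ℝ) (x : Fin 2 → ℝ) : divg (tgField a) x = 0 := by
  simp [divg, Fin.sum_univ_two, gradEntry_tgField]

theorem convection_tgField (a : ℝ) (x : Fin 2 → ℝ) (i : Fin 2) :
    ∑ j, tgField a x j * gradEntry (tgField a) i j x
      = -(a ^ 2 * π * sin (π * x i) * cos (π * x i)) := by
  simp only [Fin.sum_univ_two, gradEntry_tgField, tgField_apply_zero, tgField_apply_one]
  revert i
  refine Fin.forall_fin_two.2 ⟨?_, ?_⟩
  · simp only [Matrix.cons_val_zero, Matrix.cons_val_one, Matrix.cons_val_fin_one]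
    linear_combination (-(a ^ 2 * π * sin (π * x 0) * cos (π * x 0))) * sin_sq_add_cos_sq (π * x 1)
  · simp only [Matrix.cons_val_zero, Matrix.cons_val_one, Matrix.cons_val_fin_one]
    linear_combination (-(a ^ 2 * π * sin (π * x 1) * cos (π * x 1))) * sin_sq_add_cos_sq (π * x 0)

theorem lap_tgField (a : ℝ) (x : Fin 2 → ℝ) (i : Fin 2) :
    lap (fun y => tgField a y i) x = -(2 * π ^ 2) * tgField a x i := by
  have hsin' (s : ℝ) := (hasDerivAt_cos_pi_mul s).const_mul π
  have hcos' (s : ℝ) := ((hasDerivAt_sin_pi_mul s).const_mul π).fun_neg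
  revert i
  refine Fin.forall_fin_two.2 ⟨?_, ?_⟩
  · simp only [tgField_apply_zero,
      lap_const_mul_separable _ hasDerivAt_cos_pi_mul hcos' hasDerivAt_sin_pi_mul hsin']
    ring
  · simp only [tgField_apply_one,
      lap_const_mul_separable _ hasDerivAt_sin_pi_mul hsin' hasDerivAt_cos_pi_mul hcos']
    ring

theorem fderiv_tgPressure (a : ℝ) (x : Fin 2 → ℝ) (i : Fin 2) :
    fderiv ℝ (tgPressure a) x (Pi.single i 1) = a ^ 2 * π * sin (π * x i) * cos (π * x i) := by
  have hq (s : ℝ) : HasDerivAt (fun r => a ^ 2 / 2 * sin (π * r) ^ 2)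
      (a ^ 2 * π * sin (π * s) * cos (π * s)) s := by
    refine (((hasDerivAt_sin_pi_mul s).fun_pow 2).const_mul (a ^ 2 / 2)).congr_deriv ?_
    ring
  exact fderiv_sum_comp_apply_single hq x i

theorem contDiff_tgPressure (a : ℝ) : ContDiff ℝ 1 (tgPressure a) := by
  unfold tgPressure
  fun_prop

theorem hasDerivAt_uTG (α ν t : ℝ) (x : Fin 2 → ℝ) (i : Fin 2) :
    HasDerivAt (fun s => uTG α ν s x i) (-2 * π ^ 2 * ν * uTG α ν t x i) t := by
  have h := (((hasDerivAt_id' t).const_mul (-2 * π ^ 2 * ν)).exp.mul_const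
    (![-(cos (π * x 0)) * sin (π * x 1), sin (π * x 0) * cos (π * x 1)] i)).const_mul
    (1 + 2 * π ^ 2 * α ^ 2)
  simp only [uTG, wTG]
  refine h.congr_deriv ?_
  ring

theorem stmt10_general (α ν : ℝ) :
    ∃ p : ℝ → (Fin 2 → ℝ) → ℝ,
      (∀ t, ContDiff ℝ 1 (p t)) ∧
      (∀ t, ∀ x ∈ (Set.Ioo (0:ℝ) 1) ×ˢ (Set.Ioo (0:ℝ) 1),
        ∀ i : Fin 2,
          (deriv (fun s => uTG α ν s ![x.1, x.2] i) t
            + ∑ j, wTG ν t ![x.1, x.2] j * gradEntry (wTG ν t) i j ![x.1, x.2]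
            + fderiv ℝ (p t) ![x.1, x.2] (Pi.single i 1)
            - ν * lap (fun y => uTG α ν t y i) ![x.1, x.2] = 0) ∧
          (-α^2 * lap (fun y => wTG ν t y i) ![x.1, x.2] + wTG ν t ![x.1, x.2] i
            = uTG α ν t ![x.1, x.2] i)) ∧
      (∀ t, ∀ x ∈ (Set.Ioo (0:ℝ) 1) ×ˢ (Set.Ioo (0:ℝ) 1),
        divg (wTG ν t) ![x.1, x.2] = 0) := by
  refine ⟨fun t => tgPressure (exp (-2 * π ^ 2 * ν * t)), fun t => contDiff_tgPressure _,
    fun t x _ i => ⟨?_, ?_⟩, fun t x _ => divg_tgField _ _⟩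
  · rw [(hasDerivAt_uTG α ν t _ i).deriv, fderiv_tgPressure, wTG_eq_tgField, convection_tgField,
      uTG_eq_tgField, lap_tgField]
    ring
  · rw [wTG_eq_tgField, lap_tgField, uTG_eq_tgField]
    simp only [tgField]
    ring

/-- The pair `(u, w)` with `u = (1+2π²α²)w` solves the EMAC-Reg system
`u_t + (w·∇)w + ∇p − νΔu = 0`, `−α²Δw + w = u`, `div w = 0` on `Ω = (0,1)²`,
with pressure defined via `∇p = −(w·∇)w`. -/
theorem stmt10 (α ν : ℝ) (hα : 0 ≤ α) (hν : 0 < ν) :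
    ∃ p : ℝ → (Fin 2 → ℝ) → ℝ,
      (∀ t, ContDiff ℝ 1 (p t)) ∧
      (∀ t, ∀ x ∈ (Set.Ioo (0:ℝ) 1) ×ˢ (Set.Ioo (0:ℝ) 1),
        ∀ i : Fin 2,
          (deriv (fun s => uTG α ν s ![x.1, x.2] i) t
            + ∑ j, wTG ν t ![x.1, x.2] j * gradEntry (wTG ν t) i j ![x.1, x.2]
            + fderiv ℝ (p t) ![x.1, x.2] (Pi.single i 1)
            - ν * lap (fun y => uTG α ν t y i) ![x.1, x.2] = 0) ∧
          (-α^2 * lap (fun y => wTG ν t y i) ![x.1, x.2] + wTG ν t ![x.1, x.2] i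
            = uTG α ν t ![x.1, x.2] i)) ∧
      (∀ t, ∀ x ∈ (Set.Ioo (0:ℝ) 1) ×ˢ (Set.Ioo (0:ℝ) 1),
        divg (wTG ν t) ![x.1, x.2] = 0) :=
  stmt10_general α ν
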